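/- Let a > 1/4 and b ≥ 0. Then sup over all n₂ ∈ ℤ and τ₂ ∈ ℝ of (1 + |τ₂ + n₂²|)^{−2b} · Σ_{n₁ ∈ ℤ} 1 / (1 + |τ₂ + n₂² + 2n₁² + 2n₁·n₂|)^{2a} is finite. -/
import Mathlib


open scoped ENNReal

noncomputable def G4 (a : ℝ) : ℤ → ℝ≥0∞ :=
  fun k => ENNReal.ofReal (1 / (1 + |(k : ℝ)|) ^ (4 * a))

lemma G4_tsum_lt_top {a : ℝ} (ha : 1 / 4 < a) : ∑' k : ℤ, G4 a k < ⊤ := by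
  have h4a : (1 : ℝ) < 4 * a := by linarith
  have hnat : Summable (fun n : ℕ => 1 / (1 + (n : ℝ)) ^ (4 * a)) := by
    have h := (summable_nat_add_iff (f := fun n : ℕ => 1 / (n : ℝ) ^ (4 * a)) 1).2
      (Real.summable_one_div_nat_rpow.2 h4a)
    refine h.congr fun n => ?_
    push_cast
    ring_nf
  have hf : Summable (fun k : ℤ => 1 / (1 + |(k : ℝ)|) ^ (4 * a)) := by
    apply Summable.of_nat_of_neg
    · refine hnat.congr fun n => ?_; norm_num
    · refine hnat.congr fun n => ?_; norm_num
  have := ENNReal.ofReal_tsum_of_nonneg (f := fun k : ℤ => 1 / (1 + |(k : ℝ)|) ^ (4 * a))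
    (fun k => by positivity) hf
  simp only [G4, ← this]
  exact ENNReal.ofReal_lt_top

lemma key_real {a : ℝ} (ha : 1 / 4 < a) (c : ℝ) (t : ℤ) :
    1 / (1 + |c + (t : ℝ) ^ 2 / 2|) ^ (2 * a) ≤
      2 ^ (8 * a) *
        (1 / (1 + |((|t| - round (Real.sqrt (max (-2 * c) 0)) : ℤ) : ℝ)|) ^ (4 * a)) := by
  set s : ℝ := Real.sqrt (max (-2 * c) 0) with hs_def
  set m : ℤ := round s with hm_def
  have hs : 0 ≤ s := Real.sqrt_nonneg _
  set T : ℝ := |(t : ℝ)| with hT_def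
  have hT : 0 ≤ T := abs_nonneg _
  have hT2 : T ^ 2 = (t : ℝ) ^ 2 := sq_abs _
  set U : ℝ := |((|t| - m : ℤ) : ℝ)| with hU_def
  have hUeq : U = |T - (m : ℝ)| := by rw [hU_def]; push_cast; rfl
  have hU0 : 0 ≤ U := by rw [hUeq]; exact abs_nonneg _
  -- step 1: (T - s)^2 / 2 ≤ |c + t^2/2|
  have h1 : (T - s) ^ 2 / 2 ≤ |c + (t : ℝ) ^ 2 / 2| := by
    rcases le_or_gt 0 c with hc | hc
    · have hs0 : s = 0 := by
        rw [hs_def, max_eq_right (by linarith), Real.sqrt_zero]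
      have : |c + (t : ℝ) ^ 2 / 2| = c + (t : ℝ) ^ 2 / 2 := abs_of_nonneg (by positivity)
      rw [this, hs0]
      nlinarith
    · have hs2 : s ^ 2 = -2 * c := by
        rw [hs_def, Real.sq_sqrt (le_max_right _ _), max_eq_left (by linarith)]
      have hv : c + (t : ℝ) ^ 2 / 2 = (T - s) * (T + s) / 2 := by
        have : (T - s) * (T + s) = T ^ 2 - s ^ 2 := by ring
        rw [this, hT2, hs2]; ring
      rw [hv, abs_div, abs_mul]
      have habs : |T - s| ≤ T + s := abs_le.2 ⟨by linarith, by linarith⟩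
      have h2' : |T + s| = T + s := abs_of_nonneg (by linarith)
      have h3' : (T - s) ^ 2 = |T - s| ^ 2 := (sq_abs _).symm
      rw [h2', show |(2 : ℝ)| = 2 from abs_of_nonneg (by norm_num)]
      have := abs_nonneg (T - s)
      nlinarith
  -- step 2: (1+U)^2/16 ≤ 1 + |v|
  have hU1 : U ≤ |T - s| + 1 := by
    rw [hUeq]
    have h := abs_sub_round s
    calc |T - (m : ℝ)| ≤ |T - s| + |s - m| := by
          have := abs_sub_le (T) s (m : ℝ); linarith [abs_sub_le T s (m : ℝ)]
      _ ≤ |T - s| + 1 := by rw [hm_def]; linarith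
  have h2 : (1 + U) ^ 2 / 16 ≤ 1 + |c + (t : ℝ) ^ 2 / 2| := by
    have hu0 : 0 ≤ |T - s| := abs_nonneg _
    have hu2 : |T - s| ^ 2 = (T - s) ^ 2 := sq_abs _
    nlinarith [h1, hU1, hu0, hu2, hU0, sq_nonneg (|T - s| - 1), sq_nonneg (|T - s|)]
  -- step 3: rpow
  have ha2 : 0 ≤ 2 * a := by linarith
  have hpow : ((1 + U) ^ 2 / 16) ^ (2 * a) ≤ (1 + |c + (t : ℝ) ^ 2 / 2|) ^ (2 * a) :=
    Real.rpow_le_rpow (by positivity) h2 ha2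
  have hEq : ((1 + U) ^ 2 / 16) ^ (2 * a) = (1 + U) ^ (4 * a) / 2 ^ (8 * a) := by
    rw [Real.div_rpow (by positivity) (by norm_num)]
    congr 1
    · rw [← Real.rpow_natCast (1 + U) 2, ← Real.rpow_mul (by positivity)]
      norm_num
      ring_nf
    · rw [show (16 : ℝ) = 2 ^ (4 : ℕ) by norm_num, ← Real.rpow_natCast (2 : ℝ) 4,
        ← Real.rpow_mul (by norm_num)]
      norm_num
      ring_nf
  rw [hEq] at hpow
  have hUpos : (0 : ℝ) < (1 + U) ^ (4 * a) := Real.rpow_pos_of_pos (by linarith) _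
  have h2pos : (0 : ℝ) < (2 : ℝ) ^ (8 * a) := Real.rpow_pos_of_pos (by norm_num) _
  have hfin : 1 / (1 + |c + (t : ℝ) ^ 2 / 2|) ^ (2 * a) ≤
      1 / ((1 + U) ^ (4 * a) / 2 ^ (8 * a)) :=
    one_div_le_one_div_of_le (by positivity) hpow
  calc 1 / (1 + |c + (t : ℝ) ^ 2 / 2|) ^ (2 * a)
      ≤ 1 / ((1 + U) ^ (4 * a) / 2 ^ (8 * a)) := hfin
    _ = 2 ^ (8 * a) * (1 / (1 + U) ^ (4 * a)) := by
        rw [one_div_div]; ring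

lemma key_ennreal {a : ℝ} (ha : 1 / 4 < a) (c : ℝ) (t : ℤ) :
    ENNReal.ofReal (1 / (1 + |c + (t : ℝ) ^ 2 / 2|) ^ (2 * a)) ≤
      ENNReal.ofReal (2 ^ (8 * a)) *
        G4 a (|t| - round (Real.sqrt (max (-2 * c) 0))) := by
  simp only [G4]
  rw [← ENNReal.ofReal_mul (by positivity)]
  exact ENNReal.ofReal_le_ofReal (key_real ha c t)

lemma G4_abs_le (a : ℝ) (m t : ℤ) :
    G4 a (|t| - m) ≤ G4 a (t - m) + G4 a (t + m) := by
  rcases le_or_gt 0 t with h | h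
  · rw [abs_of_nonneg h]; exact le_self_add
  · rw [abs_of_neg h, show -t - m = -(t + m) by ring]
    have : G4 a (-(t + m)) = G4 a (t + m) := by push_cast [G4, abs_neg]; ring_nf
    rw [this]; exact le_add_self

/-- For `a > 1/4` and `b ≥ 0`,
`sup_{n₂ ∈ ℤ, τ₂ ∈ ℝ} (1 + |τ₂ + n₂²|)^{-2b} Σ_{n₁ ∈ ℤ} 1/(1 + |τ₂ + n₂² + 2n₁² + 2n₁n₂|)^{2a}`
is finite. -/
theorem stmt_4 (a b : ℝ) (ha : 1 / 4 < a) (hb : 0 ≤ b) :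
    (⨆ (n₂ : ℤ) (τ₂ : ℝ),
      ENNReal.ofReal ((1 + |τ₂ + ((n₂ ^ 2 : ℤ) : ℝ)|) ^ (-(2 * b))) *
        ∑' n₁ : ℤ,
          ENNReal.ofReal
            (1 / (1 + |τ₂ + ((n₂ ^ 2 + 2 * n₁ ^ 2 + 2 * n₁ * n₂ : ℤ) : ℝ)|) ^ (2 * a))) < ⊤ := by
  set K := ∑' k : ℤ, G4 a k with hK_def
  have hK : K < ⊤ := G4_tsum_lt_top ha
  have hC : ENNReal.ofReal (2 ^ (8 * a)) * (K + K) < ⊤ :=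
    ENNReal.mul_lt_top ENNReal.ofReal_lt_top (ENNReal.add_lt_top.2 ⟨hK, hK⟩)
  refine lt_of_le_of_lt (iSup_le fun n₂ => iSup_le fun τ₂ => ?_) hC
  set c : ℝ := τ₂ + (n₂ : ℝ) ^ 2 / 2 with hc_def
  set m : ℤ := round (Real.sqrt (max (-2 * c) 0)) with hm_def
  have hval : ∀ n₁ : ℤ, τ₂ + ((n₂ ^ 2 + 2 * n₁ ^ 2 + 2 * n₁ * n₂ : ℤ) : ℝ)
      = c + ((2 * n₁ + n₂ : ℤ) : ℝ) ^ 2 / 2 := by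
    intro n₁; rw [hc_def]; push_cast; ring
  have hpre : ENNReal.ofReal ((1 + |τ₂ + ((n₂ ^ 2 : ℤ) : ℝ)|) ^ (-(2 * b))) ≤ 1 := by
    rw [ENNReal.ofReal_le_one]
    exact Real.rpow_le_one_of_one_le_of_nonpos
      (le_add_of_nonneg_right (abs_nonneg _)) (by linarith)
  have hinj1 : Function.Injective (fun n₁ : ℤ => 2 * n₁ + n₂ - m) := by
    intro x y h; simp only at h; omega
  have hinj2 : Function.Injective (fun n₁ : ℤ => 2 * n₁ + n₂ + m) := by
    intro x y h; simp only at h; omega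
  calc ENNReal.ofReal ((1 + |τ₂ + ((n₂ ^ 2 : ℤ) : ℝ)|) ^ (-(2 * b))) *
        ∑' n₁ : ℤ, ENNReal.ofReal
          (1 / (1 + |τ₂ + ((n₂ ^ 2 + 2 * n₁ ^ 2 + 2 * n₁ * n₂ : ℤ) : ℝ)|) ^ (2 * a))
      ≤ 1 * ∑' n₁ : ℤ, ENNReal.ofReal
          (1 / (1 + |τ₂ + ((n₂ ^ 2 + 2 * n₁ ^ 2 + 2 * n₁ * n₂ : ℤ) : ℝ)|) ^ (2 * a)) :=
        mul_le_mul_left hpre _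
    _ = ∑' n₁ : ℤ, ENNReal.ofReal
          (1 / (1 + |τ₂ + ((n₂ ^ 2 + 2 * n₁ ^ 2 + 2 * n₁ * n₂ : ℤ) : ℝ)|) ^ (2 * a)) :=
        one_mul _
    _ ≤ ∑' n₁ : ℤ, ENNReal.ofReal (2 ^ (8 * a)) * G4 a (|2 * n₁ + n₂| - m) := by
        refine ENNReal.tsum_le_tsum fun n₁ => ?_
        rw [hval n₁]
        exact key_ennreal ha c (2 * n₁ + n₂)
    _ = ENNReal.ofReal (2 ^ (8 * a)) * ∑' n₁ : ℤ, G4 a (|2 * n₁ + n₂| - m) :=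
        ENNReal.tsum_mul_left
    _ ≤ ENNReal.ofReal (2 ^ (8 * a)) * (K + K) := by
        refine mul_le_mul_right ?_ _
        calc ∑' n₁ : ℤ, G4 a (|2 * n₁ + n₂| - m)
            ≤ ∑' n₁ : ℤ, (G4 a (2 * n₁ + n₂ - m) + G4 a (2 * n₁ + n₂ + m)) :=
              ENNReal.tsum_le_tsum fun n₁ => G4_abs_le a m (2 * n₁ + n₂)
          _ = (∑' n₁ : ℤ, G4 a (2 * n₁ + n₂ - m)) + ∑' n₁ : ℤ, G4 a (2 * n₁ + n₂ + m) :=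
              ENNReal.tsum_add
          _ ≤ K + K :=
              add_le_add (ENNReal.tsum_comp_le_tsum_of_injective hinj1 (G4 a))
                (ENNReal.tsum_comp_le_tsum_of_injective hinj2 (G4 a))
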